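/- Let T > 0, β > 0, α ∈ (1/2, 1), ε ∈ (0, (2α−1)/(1−α)) and set γ := α − (1+ε)/(2+ε) (note γ > 0). Define the gamma kernel K(s,t) := (1/Γ(α)) · exp(−β(t−s)) · (t−s)^{α−1} for 0 ≤ s < t ≤ T, where Γ is the Gamma function. Then there exists a constant L > 0 such that for all 0 ≤ t ≤ t' ≤ T one has ∫_0^t |K(s,t') − K(s,t)|^{2+ε} ds + ∫_t^{t'} |K(s,t')|^{2+ε} ds ≤ L·(t'−t)^{γ(2+ε)}. -/

import Mathlib

/-!
With `u = t - s ≤ v = t' - s`, the factor `exp (-β ·)` is bounded by `1` and `β`-Lipschitz on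
`[0, ∞)` while `x ↦ x ^ (α - 1)` decreases, so
`0 ≤ K(u) - K(v) ≤ c (u ^ (α-1) - v ^ (α-1)) + c β (v - u) u ^ (α-1)`.
Raising to the power `p = 2 + ε ≥ 1` and using `(x - y) ^ p ≤ x ^ p - y ^ p` leaves integrals of
`(d - s) ^ r` with `r = (α - 1) p > -1`, which are explicit. Over `[0, t]` the singular terms
telescope to `t ^ q - t' ^ q + (t' - t) ^ q ≤ (t' - t) ^ q`, where `q = r + 1 = γ p`, and the
Lipschitz term is `O((t' - t) ^ p)` with `p ≥ q`.
-/

open MeasureTheory Real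

lemma add_rpow_le_two_rpow_mul {x y p : ℝ} (hx : 0 ≤ x) (hy : 0 ≤ y) (hp : 1 ≤ p) :
    (x + y) ^ p ≤ 2 ^ (p - 1) * (x ^ p + y ^ p) := by
  lift x to NNReal using hx
  lift y to NNReal using hy
  exact_mod_cast NNReal.rpow_add_le_mul_rpow_add_rpow x y hp

lemma sub_rpow_le_rpow_sub_rpow {x y p : ℝ} (hy : 0 ≤ y) (hyx : y ≤ x) (hp : 1 ≤ p) :
    (x - y) ^ p ≤ x ^ p - y ^ p := by
  have h := add_rpow_le_rpow_add (sub_nonneg.2 hyx) hy hp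
  rw [sub_add_cancel] at h
  linarith

lemma rpow_mul_rpow_le_rpow_mul_rpow {δ t T p q : ℝ} (hδ : 0 ≤ δ) (hδT : δ ≤ T) (ht : 0 ≤ t)
    (htT : t ≤ T) (hq : 0 ≤ q) (hqp : q ≤ p) : δ ^ p * t ^ q ≤ T ^ p * δ ^ q := by
  have hT : 0 ≤ T := hδ.trans hδT
  calc δ ^ p * t ^ q = δ ^ q * (δ ^ (p - q) * t ^ q) := by
        rw [← mul_assoc, ← rpow_add_of_nonneg hδ hq (sub_nonneg.2 hqp), add_sub_cancel]
    _ ≤ δ ^ q * (T ^ (p - q) * T ^ q) := by gcongr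
    _ = T ^ p * δ ^ q := by
        rw [← rpow_add_of_nonneg hT (sub_nonneg.2 hqp) hq, sub_add_cancel, mul_comm]

lemma intervalIntegrable_sub_rpow {r : ℝ} (hr : -1 < r) (d a b : ℝ) :
    IntervalIntegrable (fun s ↦ (d - s) ^ r) volume a b := by
  simpa using
    (intervalIntegral.intervalIntegrable_rpow' hr (a := d - a) (b := d - b)).comp_sub_left d

lemma integral_sub_rpow {r : ℝ} (hr : -1 < r) (d a b : ℝ) :
    ∫ s in a..b, (d - s) ^ r = ((d - a) ^ (r + 1) - (d - b) ^ (r + 1)) / (r + 1) := by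
  rw [intervalIntegral.integral_comp_sub_left (fun u ↦ u ^ r) d, integral_rpow (Or.inl hr)]

/-- A non-integrable `f` has the junk integral `0`, and then `0 ≤ f ≤ g` gives `0 ≤ ∫ g`. -/
lemma integral_le_integral_of_nonneg_of_le_Ioo {f g : ℝ → ℝ} {a b : ℝ} (hab : a ≤ b)
    (hg : IntervalIntegrable g volume a b) (hf : 0 ≤ f) (hfg : ∀ x ∈ Set.Ioo a b, f x ≤ g x) :
    ∫ x in a..b, f x ≤ ∫ x in a..b, g x := by
  by_cases hfi : IntervalIntegrable f volume a b
  · exact intervalIntegral.integral_mono_on_of_le_Ioo hab hfi hg hfg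
  · rw [intervalIntegral.integral_undef hfi]
    simpa using intervalIntegral.integral_mono_on_of_le_Ioo (f := fun _ ↦ 0) hab
      intervalIntegrable_const hg
      fun x hx ↦ (hf x).trans (hfg x hx)

/-- The gamma kernel `K(s, t)` at lag `u = t - s`, with `c = 1 / Γ(α)`. -/
noncomputable def gammaKernel (c β α u : ℝ) : ℝ :=
  c * exp (-β * u) * u ^ (α - 1)

section GammaKernel

variable {c β α p : ℝ}

lemma abs_gammaKernel_rpow_le (hc : 0 ≤ c) (hβ : 0 ≤ β) {u : ℝ} (hu : 0 ≤ u) (hp : 0 ≤ p) :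
    |gammaKernel c β α u| ^ p ≤ c ^ p * u ^ ((α - 1) * p) := by
  have hexp : exp (-β * u) ≤ 1 := exp_le_one_iff.2 (by nlinarith)
  have hK : |gammaKernel c β α u| ≤ c * u ^ (α - 1) := by
    rw [gammaKernel, abs_of_nonneg (by positivity)]
    exact mul_le_mul_of_nonneg_right (mul_le_of_le_one_right hc hexp) (rpow_nonneg hu _)
  calc |gammaKernel c β α u| ^ p ≤ (c * u ^ (α - 1)) ^ p := by gcongr
    _ = c ^ p * u ^ ((α - 1) * p) := by rw [mul_rpow hc (rpow_nonneg hu _), ← rpow_mul hu]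

lemma exp_neg_mul_sub_exp_neg_mul_le (hβ : 0 ≤ β) {u v : ℝ} (hu : 0 ≤ u) (huv : u ≤ v) :
    exp (-β * u) - exp (-β * v) ≤ β * (v - u) := by
  have hsplit : exp (-β * v) = exp (-β * u) * exp (-(β * (v - u))) := by
    rw [← exp_add]; ring_nf
  have h₁ : exp (-β * u) ≤ 1 := exp_le_one_iff.2 (by nlinarith)
  have h₂ : exp (-(β * (v - u))) ≤ 1 := exp_le_one_iff.2 (by nlinarith)
  have h₃ := add_one_le_exp (-(β * (v - u)))
  rw [hsplit]
  nlinarith [mul_nonneg (sub_nonneg.2 h₁) (sub_nonneg.2 h₂)]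

lemma gammaKernel_sub_gammaKernel_le (hc : 0 ≤ c) (hβ : 0 ≤ β) (hα : α ≤ 1) {u v : ℝ}
    (hu : 0 < u) (huv : u ≤ v) :
    0 ≤ gammaKernel c β α u - gammaKernel c β α v ∧
      gammaKernel c β α u - gammaKernel c β α v ≤
        c * ((u ^ (α - 1) - v ^ (α - 1)) + β * (v - u) * u ^ (α - 1)) := by
  have hv : 0 < v := hu.trans_le huv
  have hpow : v ^ (α - 1) ≤ u ^ (α - 1) := rpow_le_rpow_of_nonpos hu huv (by linarith)
  have hexp : exp (-β * v) ≤ exp (-β * u) := exp_le_exp.2 (by nlinarith)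
  have hexp₁ : exp (-β * u) ≤ 1 := exp_le_one_iff.2 (by nlinarith)
  have hlip := exp_neg_mul_sub_exp_neg_mul_le hβ hu.le huv
  have hv₀ := rpow_nonneg hv.le (α - 1)
  have hdecomp : gammaKernel c β α u - gammaKernel c β α v =
      c * (exp (-β * u) * (u ^ (α - 1) - v ^ (α - 1)) +
        (exp (-β * u) - exp (-β * v)) * v ^ (α - 1)) := by
    unfold gammaKernel; ring
  have h₁ : exp (-β * u) * (u ^ (α - 1) - v ^ (α - 1)) ≤ u ^ (α - 1) - v ^ (α - 1) :=
    mul_le_of_le_one_left (sub_nonneg.2 hpow) hexp₁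
  have h₂ : (exp (-β * u) - exp (-β * v)) * v ^ (α - 1) ≤ β * (v - u) * u ^ (α - 1) :=
    mul_le_mul hlip hpow hv₀ (by nlinarith)
  rw [hdecomp]
  exact ⟨mul_nonneg hc (add_nonneg (mul_nonneg (exp_pos _).le (sub_nonneg.2 hpow))
      (mul_nonneg (sub_nonneg.2 hexp) hv₀)),
    mul_le_mul_of_nonneg_left (add_le_add h₁ h₂) hc⟩

lemma abs_gammaKernel_sub_rpow_le (hc : 0 ≤ c) (hβ : 0 ≤ β) (hα : α ≤ 1) (hp : 1 ≤ p)
    {u v : ℝ} (hu : 0 < u) (huv : u ≤ v) :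
    |gammaKernel c β α v - gammaKernel c β α u| ^ p ≤
      c ^ p * 2 ^ (p - 1) * ((u ^ ((α - 1) * p) - v ^ ((α - 1) * p)) +
        β ^ p * (v - u) ^ p * u ^ ((α - 1) * p)) := by
  obtain ⟨hK₀, hK⟩ := gammaKernel_sub_gammaKernel_le hc hβ hα hu huv
  have hv : 0 < v := hu.trans_le huv
  have hpow : v ^ (α - 1) ≤ u ^ (α - 1) := rpow_le_rpow_of_nonpos hu huv (by linarith)
  have hv₀ := rpow_nonneg hv.le (α - 1)
  have hu₀ := rpow_nonneg hu.le (α - 1)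
  rw [abs_sub_comm, abs_of_nonneg hK₀]
  calc (gammaKernel c β α u - gammaKernel c β α v) ^ p
      ≤ (c * ((u ^ (α - 1) - v ^ (α - 1)) + β * (v - u) * u ^ (α - 1))) ^ p := by gcongr
    _ = c ^ p * ((u ^ (α - 1) - v ^ (α - 1)) + β * (v - u) * u ^ (α - 1)) ^ p :=
        mul_rpow hc (by have := sub_nonneg.2 hpow; positivity)
    _ ≤ c ^ p * (2 ^ (p - 1) *
          ((u ^ (α - 1) - v ^ (α - 1)) ^ p + (β * (v - u) * u ^ (α - 1)) ^ p)) := by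
        gcongr
        exact add_rpow_le_two_rpow_mul (sub_nonneg.2 hpow) (by positivity) hp
    _ ≤ c ^ p * (2 ^ (p - 1) *
          (((u ^ (α - 1)) ^ p - (v ^ (α - 1)) ^ p) + (β * (v - u) * u ^ (α - 1)) ^ p)) := by
        gcongr
        exact sub_rpow_le_rpow_sub_rpow hv₀ hpow hp
    _ = c ^ p * 2 ^ (p - 1) * ((u ^ ((α - 1) * p) - v ^ ((α - 1) * p)) +
          β ^ p * (v - u) ^ p * u ^ ((α - 1) * p)) := by
        rw [mul_rpow (mul_nonneg hβ (sub_nonneg.2 huv)) hu₀, mul_rpow hβ (sub_nonneg.2 huv),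
          ← rpow_mul hu.le, ← rpow_mul hv.le]
        ring

lemma integral_abs_gammaKernel_rpow_le (hc : 0 ≤ c) (hβ : 0 ≤ β) (hp : 0 ≤ p)
    (hr : -1 < (α - 1) * p) {t t' : ℝ} (htt' : t ≤ t') :
    ∫ s in t..t', |gammaKernel c β α (t' - s)| ^ p ≤
      c ^ p * (t' - t) ^ ((α - 1) * p + 1) / ((α - 1) * p + 1) := by
  have hq : 0 < (α - 1) * p + 1 := by linarith
  have hval : ∫ s in t..t', c ^ p * (t' - s) ^ ((α - 1) * p) =
      c ^ p * (t' - t) ^ ((α - 1) * p + 1) / ((α - 1) * p + 1) := by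
    rw [intervalIntegral.integral_const_mul, integral_sub_rpow hr, sub_self, zero_rpow hq.ne',
      sub_zero, mul_div_assoc]
  rw [← hval]
  exact integral_le_integral_of_nonneg_of_le_Ioo htt'
    ((intervalIntegrable_sub_rpow hr _ _ _).const_mul _) (fun s ↦ by positivity)
    fun s hs ↦ abs_gammaKernel_rpow_le hc hβ (by linarith [hs.2]) hp

lemma integral_abs_gammaKernel_sub_rpow_le (hc : 0 ≤ c) (hβ : 0 ≤ β) (hα : α ≤ 1) (hp : 1 ≤ p)
    (hr : -1 < (α - 1) * p) {t t' T : ℝ} (ht : 0 ≤ t) (htt' : t ≤ t') (ht'T : t' ≤ T) :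
    ∫ s in (0 : ℝ)..t, |gammaKernel c β α (t' - s) - gammaKernel c β α (t - s)| ^ p ≤
      c ^ p * 2 ^ (p - 1) * (1 + β ^ p * T ^ p) * (t' - t) ^ ((α - 1) * p + 1) /
        ((α - 1) * p + 1) := by
  set r := (α - 1) * p
  have hq : 0 < r + 1 := by linarith
  have hδ : 0 ≤ t' - t := sub_nonneg.2 htt'
  have hval : ∫ s in (0 : ℝ)..t, c ^ p * 2 ^ (p - 1) *
        ((1 + β ^ p * (t' - t) ^ p) * (t - s) ^ r - (t' - s) ^ r) =
      c ^ p * 2 ^ (p - 1) *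
        ((1 + β ^ p * (t' - t) ^ p) * t ^ (r + 1) - (t' ^ (r + 1) - (t' - t) ^ (r + 1))) /
          (r + 1) := by
    rw [intervalIntegral.integral_const_mul,
      intervalIntegral.integral_sub ((intervalIntegrable_sub_rpow hr _ _ _).const_mul _)
        (intervalIntegrable_sub_rpow hr _ _ _),
      intervalIntegral.integral_const_mul, integral_sub_rpow hr, integral_sub_rpow hr, sub_self,
      zero_rpow hq.ne']
    simp only [sub_zero]
    ring
  have hbound : (1 + β ^ p * (t' - t) ^ p) * t ^ (r + 1) - (t' ^ (r + 1) - (t' - t) ^ (r + 1)) ≤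
      (1 + β ^ p * T ^ p) * (t' - t) ^ (r + 1) := by
    have h₁ : t ^ (r + 1) ≤ t' ^ (r + 1) := by gcongr
    have h₂ : (t' - t) ^ p * t ^ (r + 1) ≤ T ^ p * (t' - t) ^ (r + 1) :=
      rpow_mul_rpow_le_rpow_mul_rpow hδ (by linarith) ht (by linarith) hq.le (by nlinarith)
    nlinarith [mul_le_mul_of_nonneg_left h₂ (rpow_nonneg hβ p)]
  calc ∫ s in (0 : ℝ)..t, |gammaKernel c β α (t' - s) - gammaKernel c β α (t - s)| ^ p
      ≤ ∫ s in (0 : ℝ)..t, c ^ p * 2 ^ (p - 1) *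
          ((1 + β ^ p * (t' - t) ^ p) * (t - s) ^ r - (t' - s) ^ r) := by
        have hg := ((intervalIntegrable_sub_rpow hr t 0 t).const_mul (1 + β ^ p * (t' - t) ^ p)
          |>.sub (intervalIntegrable_sub_rpow hr t' 0 t)).const_mul (c ^ p * 2 ^ (p - 1))
        refine integral_le_integral_of_nonneg_of_le_Ioo ht hg (fun s ↦ by positivity)
          fun s hs ↦ ?_
        refine (abs_gammaKernel_sub_rpow_le hc hβ hα hp (sub_pos.2 hs.2)
          (by linarith : t - s ≤ t' - s)).trans_eq ?_
        rw [show t' - s - (t - s) = t' - t by ring]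
        ring
    _ ≤ c ^ p * 2 ^ (p - 1) * (1 + β ^ p * T ^ p) * (t' - t) ^ (r + 1) / (r + 1) := by
        rw [hval, mul_assoc _ (1 + β ^ p * T ^ p)]
        gcongr

end GammaKernel

/-- The gamma kernel `K(s,t) = (1/Γ(α)) * exp (-β (t-s)) * (t-s)^(α-1)` with `β > 0`,
`α ∈ (1/2, 1)`, `ε ∈ (0, (2α-1)/(1-α))` and `γ = α - (1+ε)/(2+ε)` satisfies the kernel
regularity condition. -/
theorem gamma_kernel_regularity
    (T : ℝ) (hT : 0 < T) (β α ε γ : ℝ) (hβ : 0 < β)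
    (hα : α ∈ Set.Ioo (1 / 2 : ℝ) 1)
    (hε : ε ∈ Set.Ioo (0 : ℝ) ((2 * α - 1) / (1 - α)))
    (hγ : γ = α - (1 + ε) / (2 + ε)) :
    ∃ L > 0, ∀ t t' : ℝ, 0 ≤ t → t ≤ t' → t' ≤ T →
      (∫ s in (0 : ℝ)..t,
          |(1 / Real.Gamma α) * Real.exp (-β * (t' - s)) * (t' - s) ^ (α - 1) -
            (1 / Real.Gamma α) * Real.exp (-β * (t - s)) * (t - s) ^ (α - 1)| ^ (2 + ε)) +
        (∫ s in t..t',
          |(1 / Real.Gamma α) * Real.exp (-β * (t' - s)) * (t' - s) ^ (α - 1)| ^ (2 + ε))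
      ≤ L * (t' - t) ^ (γ * (2 + ε)) := by
  obtain ⟨hα₁, hα₂⟩ := hα
  obtain ⟨hε₀, hε₁⟩ := hε
  have hc : 0 < 1 / Gamma α := one_div_pos.2 (Gamma_pos_of_pos (by linarith))
  have hp : 1 ≤ 2 + ε := by linarith
  have hr : -1 < (α - 1) * (2 + ε) := by
    rw [lt_div_iff₀ (by linarith)] at hε₁
    nlinarith
  have hγq : γ * (2 + ε) = (α - 1) * (2 + ε) + 1 := by
    rw [hγ]; field_simp; ring
  have hq : 0 < (α - 1) * (2 + ε) + 1 := by linarith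
  refine ⟨(1 / Gamma α) ^ (2 + ε) * (2 ^ (2 + ε - 1) * (1 + β ^ (2 + ε) * T ^ (2 + ε)) + 1) /
    ((α - 1) * (2 + ε) + 1), by positivity, fun t t' ht htt' ht'T ↦ ?_⟩
  rw [hγq]
  calc _ ≤ _ := add_le_add
        (integral_abs_gammaKernel_sub_rpow_le hc.le hβ.le hα₂.le hp hr ht htt' ht'T)
        (integral_abs_gammaKernel_rpow_le hc.le hβ.le (by linarith) hr htt')
    _ = _ := by ring
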